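/- arXiv:0904.1912 — 3 statements merged into one kernel-verified Lean document; each statement's English description precedes it below -/
import Mathlib

section
/- The function x ↦ h((1 + √x)/2) is concave on the interval [0,1], where h is the binary entropy function h(p) = -p log p - (1-p) log(1-p). -/
/-- The binary entropy function (base 2), with `binEnt 0 = binEnt 1 = 0`. -/
noncomputable def binEnt (p : ℝ) : ℝ :=
  -(p * Real.logb 2 p) - (1 - p) * Real.logb 2 (1 - p)

/-! With `s = √x`, the chain rule gives the derivative
`-((log (1 + s) - log (1 - s)) / s) / (4 log 2)` on `(0, 1)`. The quotient
`(log (1 + s) - log (1 - s)) / s = 2 artanh s / s` has a power series in `s²` with nonnegative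
coefficients, so it increases with `s`, hence with `x`: the derivative is antitone. -/

open Real Set

lemma binEnt_eq_binEntropy_div_log_two : binEnt = fun p => binEntropy p / log 2 := by
  funext p
  simp only [binEnt, binEntropy, logb, log_inv]
  ring

lemma continuous_binEnt : Continuous binEnt := by
  rw [binEnt_eq_binEntropy_div_log_two]
  fun_prop

lemma hasDerivAt_binEnt {p : ℝ} (hp₀ : p ≠ 0) (hp₁ : p ≠ 1) :
    HasDerivAt binEnt ((log (1 - p) - log p) / log 2) p := by
  rw [binEnt_eq_binEntropy_div_log_two]
  exact (hasDerivAt_binEntropy hp₀ hp₁).div_const _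

lemma monotoneOn_log_one_add_sub_log_one_sub_div :
    MonotoneOn (fun s => (log (1 + s) - log (1 - s)) / s) (Ioo 0 1) := by
  have hasSum_div {s : ℝ} (hs : s ∈ Ioo (0 : ℝ) 1) :
      HasSum (fun k : ℕ => 2 * (1 / (2 * k + 1)) * s ^ (2 * k))
        ((log (1 + s) - log (1 - s)) / s) := by
    have := (hasSum_log_sub_log_of_abs_lt_one (abs_lt.2 ⟨by linarith [hs.1], hs.2⟩)).div_const s
    simpa only [pow_succ, mul_div_assoc, mul_div_cancel_right₀ _ hs.1.ne'] using this
  intro s hs t ht hst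
  refine hasSum_le (fun k => ?_) (hasSum_div hs) (hasSum_div ht)
  gcongr
  exact hs.1.le

lemma hasDerivAt_binEnt_one_add_sqrt_div_two {x : ℝ} (hx₀ : 0 < x) (hx₁ : x < 1) :
    HasDerivAt (fun x => binEnt ((1 + √x) / 2))
      (-((log (1 + √x) - log (1 - √x)) / √x) / (4 * log 2)) x := by
  have hs₀ : 0 < √x := sqrt_pos.2 hx₀
  have hs₁ : √x < 1 := (sqrt_lt' one_pos).2 (by simpa using hx₁)
  have h := (hasDerivAt_binEnt (p := (1 + √x) / 2) (by linarith) (by linarith)).comp x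
    (((hasDerivAt_sqrt hx₀.ne').const_add 1).div_const 2)
  refine h.congr_deriv ?_
  rw [show 1 - (1 + √x) / 2 = (1 - √x) / 2 by ring, log_div (by linarith) two_ne_zero,
    log_div (by linarith) two_ne_zero]
  field_simp
  ring

/-- The function `x ↦ h((1 + √x)/2)` is concave on `[0,1]`. -/
theorem concaveOn_binEnt_one_add_sqrt :
    ConcaveOn ℝ (Set.Icc (0 : ℝ) 1) (fun x => binEnt ((1 + Real.sqrt x) / 2)) := by
  have hderiv : ∀ x ∈ Ioo (0 : ℝ) 1, HasDerivAt (fun x => binEnt ((1 + √x) / 2))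
      (-((log (1 + √x) - log (1 - √x)) / √x) / (4 * log 2)) x :=
    fun x hx => hasDerivAt_binEnt_one_add_sqrt_div_two hx.1 hx.2
  have hsqrt : MapsTo (√·) (Ioo (0 : ℝ) 1) (Ioo 0 1) := fun x hx =>
    ⟨sqrt_pos.2 hx.1, (sqrt_lt' one_pos).2 (by simpa using hx.2)⟩
  apply AntitoneOn.concaveOn_of_deriv (convex_Icc 0 1)
  · exact (continuous_binEnt.comp (by fun_prop)).continuousOn
  · rw [interior_Icc]
    exact fun x hx => (hderiv x hx).differentiableAt.differentiableWithinAt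
  · rw [interior_Icc]
    intro x hx y hy hxy
    rw [(hderiv x hx).deriv, (hderiv y hy).deriv]
    have : 0 < 4 * log 2 := mul_pos four_pos (log_pos one_lt_two)
    gcongr ?_ / _
    exact neg_le_neg <| monotoneOn_log_one_add_sub_log_one_sub_div (hsqrt hx) (hsqrt hy)
      (sqrt_le_sqrt hxy)
end

section
/- For non-negative operators ρ, σ on a finite-dimensional Hilbert space, the trace distance is bounded above via the fidelity: ‖ρ - σ‖ ≤ √((Tr ρ + Tr σ)² − 4 F(ρ,σ)²), where F(ρ,σ) = Tr√(√ρ σ √ρ). -/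
open scoped ComplexOrder

/-- The positive semidefinite square root of a positive semidefinite matrix
(removed from Mathlib; restored with its old definition). -/
noncomputable def Matrix.PosSemidef.sqrt {n : Type*} [Fintype n] [DecidableEq n]
    {A : Matrix n n ℂ} (hA : A.PosSemidef) : Matrix n n ℂ :=
  hA.isHermitian.eigenvectorUnitary.1 * Matrix.diagonal ((↑) ∘ (√·) ∘ hA.isHermitian.eigenvalues) *
  (star hA.isHermitian.eigenvectorUnitary : Matrix n n ℂ)

theorem Matrix.PosSemidef.posSemidef_sqrt {n : Type*} [Fintype n] [DecidableEq n]
    {A : Matrix n n ℂ} (hA : A.PosSemidef) : hA.sqrt.PosSemidef := by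
  unfold Matrix.PosSemidef.sqrt
  have := (Matrix.posSemidef_diagonal_iff (R := ℂ) (d := ((↑) ∘ (√·) ∘ hA.isHermitian.eigenvalues))).mpr
    (fun i => by simp)
  exact this.mul_mul_conjTranspose_same (hA.isHermitian.eigenvectorUnitary : Matrix n n ℂ)

/-- Trace norm `‖A‖₁ = Tr √(Aᴴ A)` of a complex matrix. -/
noncomputable def traceNorm {n : Type*} [Fintype n] [DecidableEq n] (A : Matrix n n ℂ) : ℝ :=
  ((Matrix.posSemidef_conjTranspose_mul_self A).sqrt.trace).re

/-- Fidelity `F(ρ,σ) = Tr √(√ρ σ √ρ)` of two positive semidefinite matrices. -/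
noncomputable def fid {n : Type*} [Fintype n] [DecidableEq n] {ρ σ : Matrix n n ℂ}
    (hρ : ρ.PosSemidef) (hσ : σ.PosSemidef) : ℝ := by
  have h : (hρ.sqrt * σ * hρ.sqrt).PosSemidef := by
    have h2 := hσ.mul_mul_conjTranspose_same (B := hρ.sqrt)
    rwa [hρ.posSemidef_sqrt.isHermitian.eq] at h2
  exact h.sqrt.trace.re

/-!
Write `ρ = AᴴA` and `σ = BᴴB` with `A = √ρ` and `B = Uᴴ√σ`, where `U` is the unitary factor of the
polar decomposition `√σ√ρ = U |√σ√ρ|`; this choice makes the Hilbert–Schmidt inner product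
`⟪A, B⟫ = Tr |√σ√ρ| = F(ρ, σ)` real, so that `‖A ∓ B‖₂² = Tr ρ + Tr σ ∓ 2 F(ρ, σ)`.
Since `2(ρ - σ) = (A - B)ᴴ(A + B) + (A + B)ᴴ(A - B)`, pairing with the unitary factor of `ρ - σ`
and applying Cauchy–Schwarz to both terms gives `‖ρ - σ‖ ≤ ‖A - B‖₂ ‖A + B‖₂`.
-/

open Matrix

theorem exists_orthonormalBasis_smul_eq_of_pairwise_inner_eq_zero {𝕜 E ι : Type*} [RCLike 𝕜]
    [NormedAddCommGroup E] [InnerProductSpace 𝕜 E] [FiniteDimensional 𝕜 E] [Fintype ι]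
    (h : Module.finrank 𝕜 E = Fintype.card ι) {f : ι → E}
    (hf : Pairwise fun i j ↦ inner 𝕜 (f i) (f j) = 0) :
    ∃ b : OrthonormalBasis ι 𝕜 E, ∀ i, f i = (‖f i‖ : 𝕜) • b i := by
  set v : ι → E := fun i ↦ (‖f i‖⁻¹ : 𝕜) • f i
  have hv : Orthonormal 𝕜 ({i | f i ≠ 0}.domRestrict v) := by
    refine ⟨fun i ↦ norm_smul_inv_norm i.2, fun i j hij ↦ ?_⟩
    simp only [Set.domRestrict_apply, v, inner_smul_left, inner_smul_right,
      hf (Subtype.coe_ne_coe.mpr hij), mul_zero]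
  obtain ⟨b, hb⟩ := hv.exists_orthonormalBasis_extension_of_card_eq h
  refine ⟨b, fun i ↦ ?_⟩
  by_cases hi : f i = 0
  · simp [hi]
  · rw [hb i hi, smul_inv_smul₀ (by simpa using hi)]

theorem norm_sub_mul_norm_add {𝕜 E : Type*} [RCLike 𝕜] [SeminormedAddCommGroup E]
    [InnerProductSpace 𝕜 E] (x y : E) :
    ‖x - y‖ * ‖x + y‖ = √((‖x‖ ^ 2 + ‖y‖ ^ 2) ^ 2 - 4 * RCLike.re (inner 𝕜 x y) ^ 2) := by
  rw [← Real.sqrt_sq (by positivity : 0 ≤ ‖x - y‖ * ‖x + y‖), mul_pow, norm_sub_sq (𝕜 := 𝕜),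
    norm_add_sq (𝕜 := 𝕜)]
  ring_nf

theorem Matrix.inner_toLp_col {𝕜 m n : Type*} [RCLike 𝕜] [Fintype m] (C : Matrix m n 𝕜) (j k : n) :
    inner 𝕜 (WithLp.toLp 2 (Cᵀ j)) (WithLp.toLp 2 (Cᵀ k)) = (Cᴴ * C) j k := by
  simp [EuclideanSpace.inner_eq_star_dotProduct, mul_apply, dotProduct, mul_comm]

theorem Matrix.exists_mem_unitaryGroup_eq_mul_diagonal {𝕜 n : Type*} [RCLike 𝕜] [Fintype n]
    [DecidableEq n] {C : Matrix n n 𝕜} {d : n → ℝ}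
    (hC : Cᴴ * C = diagonal (fun j ↦ (d j : 𝕜))) :
    ∃ W ∈ unitaryGroup n 𝕜, C = W * diagonal (fun j ↦ (√(d j) : 𝕜)) := by
  set c : n → EuclideanSpace 𝕜 n := fun j ↦ WithLp.toLp 2 (Cᵀ j)
  have hc : ∀ j k, inner 𝕜 (c j) (c k) = if j = k then (d j : 𝕜) else 0 := fun j k ↦ by
    rw [inner_toLp_col, hC, diagonal_apply]
  have hnorm : ∀ j, ‖c j‖ = √(d j) := fun j ↦ by
    rw [← Real.sqrt_sq (norm_nonneg _)]
    congr 1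
    exact RCLike.ofReal_injective (K := 𝕜) <| by
      rw [RCLike.ofReal_pow, ← inner_self_eq_norm_sq_to_K, hc, if_pos rfl]
  obtain ⟨b, hb⟩ := exists_orthonormalBasis_smul_eq_of_pairwise_inner_eq_zero
    (finrank_euclideanSpace (𝕜 := 𝕜) (ι := n)) (f := c) fun j k hjk ↦ by simp only [hc, if_neg hjk]
  refine ⟨(EuclideanSpace.basisFun n 𝕜).toBasis.toMatrix b,
    (EuclideanSpace.basisFun n 𝕜).toMatrix_orthonormalBasis_mem_unitary b, ?_⟩
  ext i j
  have hcol := congr_arg (·.ofLp i) (hb j)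
  simp only [c, hnorm] at hcol
  simpa [mul_diagonal, Module.Basis.toMatrix_apply, mul_comm, RCLike.real_smul_eq_coe_mul]
    using hcol

theorem Matrix.exists_mem_unitaryGroup_mul_sqrt {n : Type*} [Fintype n] [DecidableEq n]
    (M : Matrix n n ℂ) :
    ∃ W ∈ unitaryGroup n ℂ, W * (posSemidef_conjTranspose_mul_self M).sqrt = M := by
  set hH := (posSemidef_conjTranspose_mul_self M).isHermitian
  set U : Matrix n n ℂ := (hH.eigenvectorUnitary : Matrix n n ℂ)
  have hU : star U * U = 1 := Unitary.coe_star_mul_self _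
  have hU' : U * star U = 1 := Unitary.coe_mul_star_self _
  obtain ⟨W, hW, hMU⟩ :=
      exists_mem_unitaryGroup_eq_mul_diagonal (C := M * U) (d := hH.eigenvalues) <| by
    have := hH.conjStarAlgAut_star_eigenvectorUnitary
    rw [Unitary.conjStarAlgAut_star_apply] at this
    simpa [conjTranspose_mul, star_eq_conjTranspose, mul_assoc, Function.comp_def, U] using this
  refine ⟨W * star U, mul_mem hW (Unitary.star_mem hH.eigenvectorUnitary.2), ?_⟩
  calc W * star U * (posSemidef_conjTranspose_mul_self M).sqrt
      = W * (star U * U) * diagonal (fun j ↦ (√(hH.eigenvalues j) : ℂ)) * star U := by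
        simp only [PosSemidef.sqrt, mul_assoc]; rfl
    _ = M * U * star U := by rw [hU, mul_one, hMU]; rfl
    _ = M * (U * star U) := mul_assoc _ _ _
    _ = M := by rw [hU', mul_one]

theorem Matrix.exists_mem_unitaryGroup_re_trace_eq_traceNorm {n : Type*} [Fintype n]
    [DecidableEq n] (M : Matrix n n ℂ) :
    ∃ W ∈ unitaryGroup n ℂ, (star W * M).trace.re = traceNorm M := by
  obtain ⟨W, hW, hWM⟩ := exists_mem_unitaryGroup_mul_sqrt M
  refine ⟨W, hW, ?_⟩
  conv_lhs => rw [← hWM, ← mul_assoc, (mem_unitaryGroup_iff').mp hW, one_mul]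
  rfl

theorem Matrix.PosSemidef.sqrt_mul_self {n : Type*} [Fintype n] [DecidableEq n]
    {A : Matrix n n ℂ} (hA : A.PosSemidef) : hA.sqrt * hA.sqrt = A := by
  set U : Matrix n n ℂ := (hA.isHermitian.eigenvectorUnitary : Matrix n n ℂ)
  have hU : star U * U = 1 := Unitary.coe_star_mul_self _
  conv_rhs => rw [hA.isHermitian.spectral_theorem, Unitary.conjStarAlgAut_apply]
  simp only [PosSemidef.sqrt, mul_assoc]
  rw [← mul_assoc (star U) U, hU, one_mul, ← mul_assoc (diagonal _), diagonal_mul_diagonal]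
  congr 3
  funext i
  simp [← Complex.ofReal_mul, Real.mul_self_sqrt (hA.eigenvalues_nonneg i)]

theorem Matrix.PosSemidef.sqrt_congr {n : Type*} [Fintype n] [DecidableEq n]
    {A B : Matrix n n ℂ} (h : A = B) (hA : A.PosSemidef) (hB : B.PosSemidef) :
    hA.sqrt = hB.sqrt := by
  subst h; rfl

theorem fid_eq_traceNorm {n : Type*} [Fintype n] [DecidableEq n] {ρ σ : Matrix n n ℂ}
    (hρ : ρ.PosSemidef) (hσ : σ.PosSemidef) : fid hρ hσ = traceNorm (hσ.sqrt * hρ.sqrt) := by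
  have h : (hσ.sqrt * hρ.sqrt)ᴴ * (hσ.sqrt * hρ.sqrt) = hρ.sqrt * σ * hρ.sqrt := by
    rw [conjTranspose_mul, hρ.posSemidef_sqrt.isHermitian.eq, hσ.posSemidef_sqrt.isHermitian.eq,
      mul_assoc, ← mul_assoc hσ.sqrt, hσ.sqrt_mul_self, mul_assoc]
  rw [traceNorm, PosSemidef.sqrt_congr h]
  rfl

section HilbertSchmidt

variable {𝕜 m n : Type*} [RCLike 𝕜] [Fintype m] [Fintype n]

theorem Matrix.inner_toLp_vec (A B : Matrix m n 𝕜) :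
    inner 𝕜 (WithLp.toLp 2 (vec A)) (WithLp.toLp 2 (vec B)) = (Aᴴ * B).trace := by
  rw [EuclideanSpace.inner_eq_star_dotProduct, dotProduct_comm, star_vec_dotProduct_vec]

theorem Matrix.norm_toLp_vec_sq (A : Matrix m n 𝕜) :
    ‖WithLp.toLp 2 (vec A)‖ ^ 2 = RCLike.re (Aᴴ * A).trace := by
  rw [← inner_toLp_vec, ← inner_self_eq_norm_sq (𝕜 := 𝕜)]

theorem Matrix.norm_toLp_vec_mul_unitary [DecidableEq n] (A : Matrix m n 𝕜) {V : Matrix n n 𝕜}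
    (hV : V ∈ unitaryGroup n 𝕜) : ‖WithLp.toLp 2 (vec (A * V))‖ = ‖WithLp.toLp 2 (vec A)‖ := by
  refine (sq_eq_sq₀ (norm_nonneg _) (norm_nonneg _)).mp ?_
  rw [norm_toLp_vec_sq, norm_toLp_vec_sq, conjTranspose_mul, Matrix.mul_assoc, trace_mul_comm,
    Matrix.mul_assoc, Matrix.mul_assoc, ← star_eq_conjTranspose, (mem_unitaryGroup_iff).mp hV,
    Matrix.mul_one]

theorem Matrix.re_trace_mul_conjTranspose_mul_le [DecidableEq n] (X Y : Matrix m n 𝕜)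
    {V : Matrix n n 𝕜} (hV : V ∈ unitaryGroup n 𝕜) :
    RCLike.re (V * (Xᴴ * Y)).trace ≤ ‖WithLp.toLp 2 (vec X)‖ * ‖WithLp.toLp 2 (vec Y)‖ := by
  rw [trace_mul_comm, Matrix.mul_assoc, ← inner_toLp_vec, ← norm_toLp_vec_mul_unitary Y hV]
  exact re_inner_le_norm _ _

theorem Matrix.re_trace_mul_conjTranspose_mul_self_sub_le [DecidableEq n] (A B : Matrix m n 𝕜)
    {V : Matrix n n 𝕜} (hV : V ∈ unitaryGroup n 𝕜) :
    RCLike.re (V * (Aᴴ * A - Bᴴ * B)).trace ≤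
      ‖WithLp.toLp 2 (vec (A - B))‖ * ‖WithLp.toLp 2 (vec (A + B))‖ := by
  have hsplit : (Aᴴ * A - Bᴴ * B) + (Aᴴ * A - Bᴴ * B) =
      (A - B)ᴴ * (A + B) + (A + B)ᴴ * (A - B) := by
    simp only [conjTranspose_sub, conjTranspose_add, Matrix.sub_mul, Matrix.add_mul,
      Matrix.mul_sub, Matrix.mul_add]
    abel
  have h : RCLike.re (V * (Aᴴ * A - Bᴴ * B)).trace + RCLike.re (V * (Aᴴ * A - Bᴴ * B)).trace =
      RCLike.re (V * ((A - B)ᴴ * (A + B))).trace + RCLike.re (V * ((A + B)ᴴ * (A - B))).trace := by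
    rw [← map_add, ← map_add, ← trace_add, ← trace_add, ← Matrix.mul_add, ← Matrix.mul_add, hsplit]
  linarith [re_trace_mul_conjTranspose_mul_le (A - B) (A + B) hV,
    re_trace_mul_conjTranspose_mul_le (A + B) (A - B) hV]

end HilbertSchmidt

/-- Upper bound on the trace distance in terms of the fidelity:
`‖ρ - σ‖ ≤ √((Tr ρ + Tr σ)² - 4 F(ρ,σ)²)`. -/
theorem traceNorm_le_of_fidelity {n : Type*} [Fintype n] [DecidableEq n]
    {ρ σ : Matrix n n ℂ} (hρ : ρ.PosSemidef) (hσ : σ.PosSemidef) :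
    traceNorm (ρ - σ) ≤
      Real.sqrt ((ρ.trace.re + σ.trace.re) ^ 2 - 4 * fid hρ hσ ^ 2) := by
  obtain ⟨U, hU, hUF⟩ := exists_mem_unitaryGroup_re_trace_eq_traceNorm (hσ.sqrt * hρ.sqrt)
  obtain ⟨V, hV, hVD⟩ := exists_mem_unitaryGroup_re_trace_eq_traceNorm (ρ - σ)
  set A := hρ.sqrt
  set B := star U * hσ.sqrt
  have hA : Aᴴ * A = ρ := by rw [hρ.posSemidef_sqrt.isHermitian.eq, hρ.sqrt_mul_self]
  have hB : Bᴴ * B = σ := by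
    rw [conjTranspose_mul, hσ.posSemidef_sqrt.isHermitian.eq, star_eq_conjTranspose,
      conjTranspose_conjTranspose, Matrix.mul_assoc, ← Matrix.mul_assoc U,
      (mem_unitaryGroup_iff).mp hU, Matrix.one_mul, hσ.sqrt_mul_self]
  have hAB : (inner ℂ (WithLp.toLp 2 (vec A)) (WithLp.toLp 2 (vec B))).re = fid hρ hσ := by
    rw [inner_toLp_vec, hρ.posSemidef_sqrt.isHermitian.eq, trace_mul_comm, Matrix.mul_assoc,
      hUF, fid_eq_traceNorm]
  calc traceNorm (ρ - σ) = (star V * (Aᴴ * A - Bᴴ * B)).trace.re := by rw [hA, hB, hVD]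
    _ ≤ ‖WithLp.toLp 2 (vec (A - B))‖ * ‖WithLp.toLp 2 (vec (A + B))‖ :=
        re_trace_mul_conjTranspose_mul_self_sub_le A B (Unitary.star_mem hV)
    _ = _ := by
        rw [vec_sub, vec_add, WithLp.toLp_sub, WithLp.toLp_add, norm_sub_mul_norm_add (𝕜 := ℂ),
          norm_toLp_vec_sq, norm_toLp_vec_sq, hA, hB]
        simp only [RCLike.re_to_complex, hAB]
end

section
/- Let C be a linear subspace of F_2^m with dual code C^⊥, and let J be a set of coset representatives of F_2^m / C^⊥. For the states |φ^m(x,k)⟩ := (1/√(P_K^m(k))) Σ_{l∈F_2^m} (−1)^{x·l} √(P_{KL}^m(k,l)) |k,l⟩ and ρ^{x,k} := |φ^m(x,k)⟩⟨φ^m(x,k)|, for any a ∈ F_2^m, the uniform mixture Σ_{x∈C} (1/|C|) ρ^{x+a,k} equals Σ_{j∈J} P_{J|K^m=k}(j) |ϑ(a,k,j)⟩⟨ϑ(a,k,j)|, where P_{J|K^m=k}(j) := Σ_{c∈C^⊥} P_{KL}^m(k, j+c) / P_K^m(k) and |ϑ(a,k,j)⟩ := (Σ_{e∈C^⊥} P_{KL}^m(k,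 j+e))^{-1/2} Σ_{c∈C^⊥} (−1)^{a·c} √(P_{KL}^m(k,j+c)) |k, j+c⟩. Moreover, the vectors |ϑ(a,k,j)⟩ for distinct j ∈ J are orthogonal, so this is a spectral decomposition. -/
/-- Standard bilinear form on `F₂^m`. -/
def dotF2 {m : ℕ} (x y : Fin m → ZMod 2) : ZMod 2 := ∑ i, x i * y i

/-- The complex sign `(-1)^a` for `a ∈ F₂`. -/
def chF2 (a : ZMod 2) : ℂ := if a = 0 then 1 else -1

/-- The rank-one projector `|v⟩⟨v|`. -/
def outer {α : Type*} (v : α → ℂ) : Matrix α α ℂ := fun i j => v i * star (v j)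

/-- `m`-fold product distribution `P_{KL}^m`. -/
noncomputable def PKLm {m : ℕ} (PKL : ZMod 2 × ZMod 2 → ℝ) (k l : Fin m → ZMod 2) : ℝ :=
  ∏ i, PKL (k i, l i)

/-- Marginal `P_K^m` on the first component. -/
noncomputable def PKm {m : ℕ} (PKL : ZMod 2 × ZMod 2 → ℝ) (k : Fin m → ZMod 2) : ℝ :=
  ∑ l, PKLm PKL k l

/-- The dual code `C^⊥ = {y : y·c = 0 for all c ∈ C}`. -/
def dualCode {m : ℕ} (C : Finset (Fin m → ZMod 2)) : Finset (Fin m → ZMod 2) :=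
  Finset.univ.filter (fun y => ∀ c ∈ C, dotF2 y c = 0)

/-- The state `|φ^m(x,k)⟩ = P_K^m(k)^{-1/2} Σ_l (-1)^{x·l} √(P_{KL}^m(k,l)) |k,l⟩`,
written in the orthonormal basis `{|k,l⟩}` indexed by `F₂^m × F₂^m`. -/
noncomputable def phiVec {m : ℕ} (PKL : ZMod 2 × ZMod 2 → ℝ) (x k : Fin m → ZMod 2) :
    (Fin m → ZMod 2) × (Fin m → ZMod 2) → ℂ :=
  fun p => if p.1 = k then
    ((Real.sqrt (PKm PKL k))⁻¹ : ℝ) * chF2 (dotF2 x p.2) * (Real.sqrt (PKLm PKL k p.2) : ℝ)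
  else 0

/-- The eigenvector `|ϑ(a,k,j)⟩`, supported on the coset `j + C^⊥` in the second
register (note `p.2 = j + c ↔ p.2 + j ∈ C^⊥` in characteristic two). -/
noncomputable def thetaVec {m : ℕ} (PKL : ZMod 2 × ZMod 2 → ℝ)
    (C : Finset (Fin m → ZMod 2)) (a k j : Fin m → ZMod 2) :
    (Fin m → ZMod 2) × (Fin m → ZMod 2) → ℂ :=
  fun p => if p.1 = k ∧ (p.2 + j) ∈ dualCode C then
    ((Real.sqrt (∑ e ∈ dualCode C, PKLm PKL k (j + e)))⁻¹ : ℝ) *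
      chF2 (dotF2 a (p.2 + j)) * (Real.sqrt (PKLm PKL k p.2) : ℝ)
  else 0

/-- The conditional coset probability `P_{J|K^m=k}(j)`. -/
noncomputable def Pcoset {m : ℕ} (PKL : ZMod 2 × ZMod 2 → ℝ)
    (C : Finset (Fin m → ZMod 2)) (k j : Fin m → ZMod 2) : ℝ :=
  (∑ c ∈ dualCode C, PKLm PKL k (j + c)) / PKm PKL k

lemma zmod2_cases (u : ZMod 2) : u = 0 ∨ u = 1 := by revert u; decide

lemma two_eq_zero' : (1 : ZMod 2) + 1 = 0 := by decide

lemma chF2_mul (u v : ZMod 2) : chF2 u * chF2 v = chF2 (u + v) := by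
  rcases zmod2_cases u with h|h <;> rcases zmod2_cases v with h'|h' <;>
    subst h <;> subst h' <;> simp [chF2, two_eq_zero']

lemma star_chF2 (u : ZMod 2) : star (chF2 u) = chF2 u := by
  unfold chF2; split <;> simp

lemma conj_chF2 (u : ZMod 2) : (starRingEnd ℂ) (chF2 u) = chF2 u := star_chF2 u

lemma addv {m : ℕ} (v : Fin m → ZMod 2) : v + v = 0 := by
  funext i
  show v i + v i = 0
  rcases zmod2_cases (v i) with h|h <;> rw [h] <;> [rfl; exact two_eq_zero']

lemma dot_add_left {m : ℕ} (x y w : Fin m → ZMod 2) :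
    dotF2 (x + y) w = dotF2 x w + dotF2 y w := by
  simp [dotF2, add_mul, Finset.sum_add_distrib]

lemma dot_add_right {m : ℕ} (x u v : Fin m → ZMod 2) :
    dotF2 x (u + v) = dotF2 x u + dotF2 x v := by
  simp [dotF2, mul_add, Finset.sum_add_distrib]

lemma dot_comm {m : ℕ} (x y : Fin m → ZMod 2) : dotF2 x y = dotF2 y x := by
  simp [dotF2, mul_comm]

lemma mem_dual {m : ℕ} {C : Finset (Fin m → ZMod 2)} {y : Fin m → ZMod 2} :
    y ∈ dualCode C ↔ ∀ c ∈ C, dotF2 y c = 0 := by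
  simp [dualCode]

lemma dual_add {m : ℕ} {C : Finset (Fin m → ZMod 2)} {y z : Fin m → ZMod 2}
    (hy : y ∈ dualCode C) (hz : z ∈ dualCode C) : y + z ∈ dualCode C := by
  rw [mem_dual] at *
  intro c hc
  rw [dot_add_left, hy c hc, hz c hc, add_zero]

lemma PKLm_nonneg {m : ℕ} {PKL : ZMod 2 × ZMod 2 → ℝ} (hPKL : ∀ z, 0 ≤ PKL z)
    (k l : Fin m → ZMod 2) : 0 ≤ PKLm PKL k l :=
  Finset.prod_nonneg fun _ _ => hPKL _

lemma char_sum {m : ℕ} (C : Finset (Fin m → ZMod 2))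
    (hadd : ∀ x ∈ C, ∀ y ∈ C, x + y ∈ C) (w : Fin m → ZMod 2) :
    ∑ x ∈ C, chF2 (dotF2 x w) = if w ∈ dualCode C then (C.card : ℂ) else 0 := by
  by_cases hw : w ∈ dualCode C
  · rw [if_pos hw]
    rw [Finset.sum_congr rfl (fun x hx => ?_), Finset.sum_const, nsmul_eq_mul, mul_one]
    rw [dot_comm, mem_dual.mp hw x hx]
    simp [chF2]
  · rw [if_neg hw]
    rw [mem_dual] at hw
    push_neg at hw
    obtain ⟨c, hc, hdc⟩ := hw
    have hd1 : dotF2 w c = 1 := (zmod2_cases _).resolve_left hdc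
    have key : ∑ x ∈ C, chF2 (dotF2 x w) = ∑ x ∈ C, chF2 (dotF2 (x + c) w) := by
      apply Finset.sum_nbij' (fun x => x + c) (fun x => x + c)
      · intro x hx; exact hadd x hx c hc
      · intro x hx; exact hadd x hx c hc
      · intro x _; rw [add_assoc, addv, add_zero]
      · intro x _; rw [add_assoc, addv, add_zero]
      · intro x _; rw [add_assoc, addv, add_zero]
    have key2 : ∀ x, chF2 (dotF2 (x + c) w) = - chF2 (dotF2 x w) := by
      intro x
      rw [dot_add_left, ← chF2_mul, dot_comm c w, hd1]
      simp [chF2]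
    rw [Finset.sum_congr rfl (fun x _ => key2 x), Finset.sum_neg_distrib] at key
    have h2 : (2:ℂ) * ∑ x ∈ C, chF2 (dotF2 x w) = 0 := by linear_combination key
    exact (mul_eq_zero.mp h2).resolve_left two_ne_zero

/-- Spectral decomposition of the uniform mixture over a coset of a linear code:
`Σ_{x∈C} |C|⁻¹ |φ(x+a,k)⟩⟨φ(x+a,k)| = Σ_{j∈J} P_{J|K^m=k}(j) |ϑ(a,k,j)⟩⟨ϑ(a,k,j)|`,
and the vectors `|ϑ(a,k,j)⟩`, `j ∈ J`, are pairwise orthogonal. -/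
theorem mixture_eigendecomposition {m : ℕ}
    (PKL : ZMod 2 × ZMod 2 → ℝ) (hPKL : ∀ z, 0 ≤ PKL z)
    (C : Finset (Fin m → ZMod 2))
    (hzero : (0 : Fin m → ZMod 2) ∈ C)
    (hadd : ∀ x ∈ C, ∀ y ∈ C, x + y ∈ C)
    (J : Finset (Fin m → ZMod 2))
    (hJ : ∀ v : Fin m → ZMod 2, ∃! j, j ∈ J ∧ (v + j) ∈ dualCode C)
    (k : Fin m → ZMod 2) (hk : 0 < PKm PKL k)
    (a : Fin m → ZMod 2) :
    (∑ x ∈ C, ((C.card : ℂ))⁻¹ • outer (phiVec PKL (x + a) k)) =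
      (∑ j ∈ J, ((Pcoset PKL C k j : ℝ) : ℂ) • outer (thetaVec PKL C a k j)) ∧
    (∀ j ∈ J, ∀ i ∈ J, j ≠ i →
      ∑ p, star (thetaVec PKL C a k j p) * thetaVec PKL C a k i p = 0) := by
  classical
  constructor
  · ext p q
    simp only [Matrix.sum_apply, Matrix.smul_apply, smul_eq_mul, outer]
    by_cases hp : p.1 = k
    · by_cases hq : q.1 = k
      · set w := p.2 + q.2 with hw
        have hcard : (C.card : ℂ) ≠ 0 :=
          Nat.cast_ne_zero.mpr (Finset.card_ne_zero_of_mem hzero)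
        have hch : ∀ x : Fin m → ZMod 2,
            chF2 (dotF2 (x + a) p.2) * chF2 (dotF2 (x + a) q.2)
              = chF2 (dotF2 x w) * chF2 (dotF2 a w) := by
          intro x
          rw [chF2_mul, ← dot_add_right, dot_add_left, ← chF2_mul]
        have hL : ∑ x ∈ C,
            (C.card : ℂ)⁻¹ * (phiVec PKL (x + a) k p * star (phiVec PKL (x + a) k q))
            = ((C.card : ℂ)⁻¹ * ((((Real.sqrt (PKm PKL k))⁻¹ : ℝ) : ℂ)
                * (((Real.sqrt (PKm PKL k))⁻¹ : ℝ) : ℂ)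
                * ((Real.sqrt (PKLm PKL k p.2) : ℝ) : ℂ)
                * ((Real.sqrt (PKLm PKL k q.2) : ℝ) : ℂ)
                * chF2 (dotF2 a w)))
              * ∑ x ∈ C, chF2 (dotF2 x w) := by
          rw [Finset.mul_sum]
          refine Finset.sum_congr rfl fun x _ => ?_
          simp only [phiVec, if_pos hp, if_pos hq, star_mul', Complex.star_def,
            Complex.conj_ofReal, conj_chF2]
          linear_combination ((C.card : ℂ)⁻¹ * (((Real.sqrt (PKm PKL k))⁻¹ : ℝ) : ℂ)
            * (((Real.sqrt (PKm PKL k))⁻¹ : ℝ) : ℂ)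
            * ((Real.sqrt (PKLm PKL k p.2) : ℝ) : ℂ)
            * ((Real.sqrt (PKLm PKL k q.2) : ℝ) : ℂ)) * hch x
        rw [hL, char_sum C hadd w]
        by_cases hwD : w ∈ dualCode C
        · rw [if_pos hwD]
          obtain ⟨j0, ⟨hj0J, hj0D⟩, huniq⟩ := hJ p.2
          have hq2 : q.2 + j0 ∈ dualCode C := by
            have he : q.2 + j0 = w + (p.2 + j0) := by
              rw [hw]
              have h2 : p.2 + q.2 + (p.2 + j0) = (p.2 + p.2) + (q.2 + j0) := by abel
              rw [h2, addv, zero_add]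
            rw [he]; exact dual_add hwD hj0D
          rw [Finset.sum_eq_single j0
            (fun b hb hne => by
              have hnd : ¬ (p.2 + b ∈ dualCode C) := fun hmm => hne (huniq b ⟨hb, hmm⟩)
              simp [thetaVec, hnd])
            (fun h => absurd hj0J h)]
          simp only [thetaVec, hp, hq, hj0D, hq2, eq_self_iff_true, true_and, and_self,
            and_true, if_true, star_mul', Complex.star_def, Complex.conj_ofReal, conj_chF2]
          set S := ∑ e ∈ dualCode C, PKLm PKL k (j0 + e) with hS
          have hSnn : 0 ≤ S := Finset.sum_nonneg fun e _ => PKLm_nonneg hPKL _ _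
          have hch2 : chF2 (dotF2 a (p.2 + j0)) * chF2 (dotF2 a (q.2 + j0))
              = chF2 (dotF2 a w) := by
            rw [chF2_mul, ← dot_add_right]
            congr 2
            rw [hw]
            have h2 : p.2 + j0 + (q.2 + j0) = (j0 + j0) + (p.2 + q.2) := by abel
            rw [h2, addv, zero_add]
          by_cases hS0 : S = 0
          · have hpz : PKLm PKL k p.2 = 0 := by
              have hsum0 : ∑ e ∈ dualCode C, PKLm PKL k (j0 + e) = 0 := by
                rw [← hS]; exact hS0
              have := (Finset.sum_eq_zero_iff_of_nonneg
                (fun e (_ : e ∈ dualCode C) => PKLm_nonneg hPKL k (j0 + e))).mp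
                hsum0 (p.2 + j0) hj0D
              have hrw : j0 + (p.2 + j0) = p.2 := by
                have h2 : j0 + (p.2 + j0) = (j0 + j0) + p.2 := by abel
                rw [h2, addv, zero_add]
              rwa [hrw] at this
            rw [hpz]
            simp
          · have hPKmne : PKm PKL k ≠ 0 := ne_of_gt hk
            have hA : ((Real.sqrt (PKm PKL k))⁻¹ * (Real.sqrt (PKm PKL k))⁻¹ : ℝ)
                = (PKm PKL k)⁻¹ := by
              rw [← mul_inv, Real.mul_self_sqrt hk.le]
            have hT : ((Real.sqrt S)⁻¹ * (Real.sqrt S)⁻¹ : ℝ) = S⁻¹ := by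
              rw [← mul_inv, Real.mul_self_sqrt hSnn]
            have hPc : (Pcoset PKL C k j0 * (S⁻¹) : ℝ) = (PKm PKL k)⁻¹ := by
              rw [Pcoset, ← hS]
              field_simp
            have hnumR : Pcoset PKL C k j0 * ((Real.sqrt S)⁻¹ * (Real.sqrt S)⁻¹)
                = (Real.sqrt (PKm PKL k))⁻¹ * (Real.sqrt (PKm PKL k))⁻¹ := by
              rw [hT, hA]; exact hPc
            have hnum : ((Pcoset PKL C k j0 : ℝ) : ℂ)
                * ((((Real.sqrt S)⁻¹ : ℝ) : ℂ) * (((Real.sqrt S)⁻¹ : ℝ) : ℂ))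
                = (((Real.sqrt (PKm PKL k))⁻¹ : ℝ) : ℂ)
                  * (((Real.sqrt (PKm PKL k))⁻¹ : ℝ) : ℂ) := by
              exact_mod_cast congrArg Complex.ofReal hnumR
            have hcc : (C.card : ℂ) * (C.card : ℂ)⁻¹ = 1 := mul_inv_cancel₀ hcard
            linear_combination ((((Real.sqrt (PKm PKL k))⁻¹ : ℝ) : ℂ)
                * (((Real.sqrt (PKm PKL k))⁻¹ : ℝ) : ℂ)
                * ((Real.sqrt (PKLm PKL k p.2) : ℝ) : ℂ)
                * ((Real.sqrt (PKLm PKL k q.2) : ℝ) : ℂ) * chF2 (dotF2 a w)) * hcc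
              - (((Real.sqrt (PKLm PKL k p.2) : ℝ) : ℂ)
                * ((Real.sqrt (PKLm PKL k q.2) : ℝ) : ℂ) * chF2 (dotF2 a w)) * hnum
              - (((Pcoset PKL C k j0 : ℝ) : ℂ) * (((Real.sqrt S)⁻¹ : ℝ) : ℂ)
                * (((Real.sqrt S)⁻¹ : ℝ) : ℂ) * ((Real.sqrt (PKLm PKL k p.2) : ℝ) : ℂ)
                * ((Real.sqrt (PKLm PKL k q.2) : ℝ) : ℂ)) * hch2
        · rw [if_neg hwD]
          rw [mul_zero]
          symm
          refine Finset.sum_eq_zero fun j hj => ?_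
          rcases Classical.em (p.2 + j ∈ dualCode C) with hpj | hpj
          · have hqj : ¬ (q.2 + j ∈ dualCode C) := by
              intro hqj
              apply hwD
              have he : w = (p.2 + j) + (q.2 + j) := by
                rw [hw]
                have h2 : p.2 + j + (q.2 + j) = (j + j) + (p.2 + q.2) := by abel
                rw [h2, addv, zero_add]
              rw [he]; exact dual_add hpj hqj
            simp [thetaVec, hqj]
          · simp [thetaVec, hpj]
      · rw [Finset.sum_eq_zero (fun x _ => by simp [phiVec, hq]),
          Finset.sum_eq_zero (fun j _ => by simp [thetaVec, hq])]
    · rw [Finset.sum_eq_zero (fun x _ => by simp [phiVec, hp]),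
        Finset.sum_eq_zero (fun j _ => by simp [thetaVec, hp])]
  · intro j hj i hi hne
    refine Finset.sum_eq_zero fun p _ => ?_
    rcases Classical.em (p.1 = k ∧ p.2 + j ∈ dualCode C) with h1 | h1
    · have h2 : ¬ (p.1 = k ∧ p.2 + i ∈ dualCode C) := by
        rintro ⟨-, h2⟩
        obtain ⟨j0, -, huniq⟩ := hJ p.2
        exact hne ((huniq j ⟨hj, h1.2⟩).trans (huniq i ⟨hi, h2⟩).symm)
      simp [thetaVec, h2]
    · simp [thetaVec, h1]
end
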